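/- arXiv:2409.03590 — 2 statements merged into one kernel-verified Lean document; each statement's English description precedes it below -/
import Mathlib

section
/- The function φ(z) = Σ_{d≥0} (2d)!/(d!)^5 · z^{3d} satisfies the scalar ODE D^4φ − 108 z^3 Dφ − 162 z^3 φ = 0, where D = z·d/dz. -/
open PowerSeries

/-!
Writing `φ = Σ c_d z^{3d}`, the Euler operator acts diagonally, `D(z^n) = n z^n`, so the ODE is
equivalent to the two-term recurrence `(3d+3)^4 c_{d+1} = (108·3d + 162) c_d`. For
`c_d = (2d)!/(d!)^5` the ratio `c_{d+1}/c_d` is `(2d+2)(2d+1)/(d+1)^5`, which is exactly that.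
-/

section EulerOperator

variable {R : Type*} [CommRing R]

noncomputable def eulerOp (f : R⟦X⟧) : R⟦X⟧ :=
  mk fun n => (n : R) * coeff n f

theorem coeff_eulerOp (n : ℕ) (f : R⟦X⟧) : coeff n (eulerOp f) = (n : R) * coeff n f :=
  coeff_mk _ _

theorem coeff_iterate_eulerOp (m n : ℕ) (f : R⟦X⟧) :
    coeff n (eulerOp^[m] f) = (n : R) ^ m * coeff n f := by
  induction m generalizing f with
  | zero => simp
  | succ m ih => rw [Function.iterate_succ_apply, ih, coeff_eulerOp]; ring

theorem coeff_eulerOp_ode (m k n : ℕ) (a b : R) (f : R⟦X⟧) :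
    coeff n (eulerOp^[m] f - C a * X ^ k * eulerOp f - C b * X ^ k * f)
      = (n : R) ^ m * coeff n f
        - if k ≤ n then (a * ((n - k : ℕ) : R) + b) * coeff (n - k) f else 0 := by
  simp only [map_sub, mul_assoc, coeff_C_mul, coeff_X_pow_mul', coeff_iterate_eulerOp,
    coeff_eulerOp]
  split_ifs <;> ring

noncomputable def expandSeq (k : ℕ) (c : ℕ → R) : R⟦X⟧ :=
  mk fun n => if k ∣ n then c (n / k) else 0

theorem eulerOp_ode_expandSeq {m k : ℕ} (hm : 0 < m) (hk : 0 < k) {a b : R} {c : ℕ → R}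
    (hc : ∀ d, ((k * (d + 1) : ℕ) : R) ^ m * c (d + 1) = (a * ((k * d : ℕ) : R) + b) * c d) :
    eulerOp^[m] (expandSeq k c) - C a * X ^ k * eulerOp (expandSeq k c)
      - C b * X ^ k * expandSeq k c = 0 := by
  ext n
  simp only [coeff_eulerOp_ode, expandSeq, coeff_mk, map_zero]
  by_cases hn : k ∣ n
  · obtain ⟨d, rfl⟩ := hn
    cases d with
    | zero => simp [hk.ne', hm.ne']
    | succ d =>
      have hsub : k * (d + 1) - k = k * d := by rw [Nat.mul_succ, Nat.add_sub_cancel]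
      simp only [dvd_mul_right, if_true, Nat.mul_div_cancel_left _ hk, hsub,
        Nat.le_mul_of_pos_right k d.succ_pos, hc, sub_self]
  · have hn_sub : k ≤ n → ¬ k ∣ n - k := fun hkn hd =>
      hn ((Nat.dvd_sub_iff_left hkn dvd_rfl).mp hd)
    split_ifs with hkn <;> simp_all

end EulerOperator

noncomputable def quantumPeriodCoeff (K : Type*) [Field K] (d : ℕ) : K :=
  (2 * d).factorial / d.factorial ^ 5

theorem succ_pow_four_mul_quantumPeriodCoeff_succ {K : Type*} [Field K] [CharZero K] (d : ℕ) :
    ((d : K) + 1) ^ 4 * quantumPeriodCoeff K (d + 1) = 2 * (2 * d + 1) * quantumPeriodCoeff K d := by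
  unfold quantumPeriodCoeff
  rw [show 2 * (d + 1) = 2 * d + 1 + 1 by ring, Nat.factorial_succ, Nat.factorial_succ,
    Nat.factorial_succ]
  have : (d.factorial : K) ≠ 0 := Nat.cast_ne_zero.mpr d.factorial_ne_zero
  have : (d : K) + 1 ≠ 0 := Nat.cast_add_one_ne_zero d
  push_cast
  field_simp
  ring

/-- The quantum period `φ(z) = Σ_{d≥0} (2d)!/(d!)^5 z^{3d}` of `LG(2,4)` satisfies the
scalar ODE `D⁴φ − 108 z³ Dφ − 162 z³ φ = 0`, where `D = z d/dz` is the Euler operator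
(acting on formal power series by `D(Σ aₙ zⁿ) = Σ n aₙ zⁿ`). -/
theorem quantum_period_satisfies_ODE :
    let D : PowerSeries ℂ → PowerSeries ℂ :=
      fun f => PowerSeries.mk fun n => (n : ℂ) * PowerSeries.coeff (R := ℂ) n f
    let φ : PowerSeries ℂ :=
      PowerSeries.mk fun n =>
        if 3 ∣ n then ((2 * (n / 3)).factorial : ℂ) / ((n / 3).factorial : ℂ) ^ 5 else 0
    D (D (D (D φ))) - 108 * (PowerSeries.X : PowerSeries ℂ) ^ 3 * D φ
      - 162 * (PowerSeries.X : PowerSeries ℂ) ^ 3 * φ = 0 := by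
  intro D φ
  rw [← map_ofNat C 108, ← map_ofNat C 162]
  exact eulerOp_ode_expandSeq (m := 4) (k := 3) (c := quantumPeriodCoeff ℂ) (by norm_num)
    (by norm_num) fun d => by
      push_cast
      linear_combination 81 * succ_pow_four_mul_quantumPeriodCoeff_succ (K := ℂ) d
end

section
/- The 4×4 matrix 𝒰 with rows (0,0,3,0), (3,0,0,3), (0,6,0,0), (0,0,3,0) has characteristic polynomial λ⁴ − 108λ and four distinct eigenvalues 0, 3·2^{2/3}, 3·2^{2/3}e^{2πi/3}, 3·2^{2/3}e^{4πi/3}. -/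
/-!
Expanding `det (X - 𝒰)` along the first row gives `X⁴ - 108 X = X (X³ - 108)`. Since
`(3 · 2^{2/3})³ = 108`, its roots are `0` and `3 · 2^{2/3} ω^k` for a primitive cube root of
unity `ω`; these are pairwise distinct, and over a field the roots of the characteristic
polynomial are exactly the eigenvalues.
-/

open Polynomial

theorem Complex.cpow_div_natCast_pow (x k : ℂ) {n : ℕ} (hn : n ≠ 0) :
    (x ^ (k / n)) ^ n = x ^ k := by
  rw [← Complex.cpow_mul_nat, div_mul_cancel₀ _ (Nat.cast_ne_zero.mpr hn)]

theorem Polynomial.isRoot_X_pow_succ_sub_C_mul_X {R : Type*} [CommRing R] {n : ℕ} {b c ζ : R}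
    (hc : c ^ n = b) (hζ : ζ ^ n = 1) : (X ^ (n + 1) - C b * X).IsRoot (c * ζ) := by
  simp only [IsRoot, eval_sub, eval_mul, eval_pow, eval_C, eval_X, ← hc]
  rw [pow_succ, mul_pow, hζ]
  ring

theorem Matrix.vecCons_zero_mul_pow_eq_cons {R : Type*} [Monoid R] [Zero R] (c ω : R) :
    ![0, c, c * ω, c * ω ^ 2] = Fin.cons 0 (fun k : Fin 3 => c * ω ^ (k : ℕ)) := by
  refine congrArg (Fin.cons 0) (funext fun k => ?_)
  fin_cases k <;> simp

theorem IsPrimitiveRoot.injective_cons_zero_mul_pow {R : Type*} [CommRing R] [IsDomain R]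
    {n : ℕ} {ω c : R} (hω : IsPrimitiveRoot ω n) (hc : c ≠ 0) :
    Function.Injective (Fin.cons 0 (fun k : Fin n => c * ω ^ (k : ℕ)) : Fin (n + 1) → R) := by
  refine Fin.cons_injective_of_injective ?_ ?_
  · rintro ⟨k, hk⟩
    exact mul_ne_zero hc (pow_ne_zero _ (hω.ne_zero (Fin.pos k).ne')) hk
  · intro k l hkl
    exact Fin.ext (hω.pow_inj k.isLt l.isLt (mul_left_cancel₀ hc hkl))

theorem charpoly_LG24_Euler_matrix :
    (!![0, 0, 3, 0; 3, 0, 0, 3; 0, 6, 0, 0; 0, 0, 3, 0] : Matrix (Fin 4) (Fin 4) ℂ).charpoly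
      = X ^ 4 - C 108 * X := by
  simp [Matrix.charpoly, Matrix.det_succ_row_zero, Fin.sum_univ_succ, Fin.succAbove, map_ofNat]
  ring

/-- The matrix `𝒰` of quantum multiplication by the Euler vector field of `LG(2,4)` at
`q = 1` (in the Schubert basis) has characteristic polynomial `λ⁴ − 108λ` and four
distinct eigenvalues `0, 3·2^{2/3}, 3·2^{2/3}e^{2πi/3}, 3·2^{2/3}e^{4πi/3}`. -/
theorem LG24_Euler_matrix_charpoly_eigenvalues :
    let U : Matrix (Fin 4) (Fin 4) ℂ :=
      !![0, 0, 3, 0; 3, 0, 0, 3; 0, 6, 0, 0; 0, 0, 3, 0]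
    let a : ℂ := (2 : ℂ) ^ ((2 : ℂ) / 3)
    let ω : ℂ := Complex.exp (2 * Real.pi * Complex.I / 3)
    let ev : Fin 4 → ℂ := ![0, 3 * a, 3 * a * ω, 3 * a * ω ^ 2]
    U.charpoly = X ^ 4 - C 108 * X ∧
      Function.Injective ev ∧
      ∀ i : Fin 4, Module.End.HasEigenvalue (Matrix.toLin' U) (ev i) := by
  intro U a ω ev
  have hω : IsPrimitiveRoot ω 3 := by simpa using Complex.isPrimitiveRoot_exp 3 (by norm_num)
  have ha : a ^ 3 = 4 := by
    have h := Complex.cpow_div_natCast_pow 2 2 three_ne_zero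
    rw [Nat.cast_ofNat, Complex.cpow_ofNat] at h
    norm_num [a, h]
  have h3a : (3 * a) ^ 3 = 108 := by rw [mul_pow, ha]; norm_num
  have h3a0 : 3 * a ≠ 0 := fun h => by norm_num [h] at h3a
  have hev : ev = Fin.cons 0 (fun k : Fin 3 => 3 * a * ω ^ (k : ℕ)) :=
    Matrix.vecCons_zero_mul_pow_eq_cons _ _
  have hU := charpoly_LG24_Euler_matrix
  refine ⟨hU, ?_, fun i => ?_⟩
  · exact hev ▸ hω.injective_cons_zero_mul_pow h3a0
  · rw [Module.End.hasEigenvalue_iff_isRoot_charpoly, Matrix.charpoly_toLin', hU, hev]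
    refine Fin.cases (by simp) (fun k => ?_) i
    exact isRoot_X_pow_succ_sub_C_mul_X h3a
      (by rw [pow_right_comm, hω.pow_eq_one, one_pow])
end
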